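/- arXiv:2602.12386 — 4 statements merged into one kernel-verified Lean document; each statement's English description precedes it below -/
import Mathlib

section
/- Let {w_t} be a nonnegative real sequence satisfying w_{t+1} ≤ (1 - k·α_t)·w_t + C·α_t^2 for all t ≥ 0, where α_t = α/(t+h) with k > 0, C ≥ 0, α > 0, h ≥ 1, and k·α_t < 1 and kα < 1. Then for all T ≥ 0, w_{T+1} ≤ (w_0 + (C α²/h²)·(h + 2 - kα)/(1 - kα)) · ((h+1)/(h+T+1))^{kα}. -/
lemma stmt2_bern (p s : ℝ) (hp0 : 0 ≤ p) (hp1 : p ≤ 1) (hs : 1 ≤ s) :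
    (s+1)^p ≤ s^p * ((s+p)/s) := by
  have hs0 : (0:ℝ) < s := lt_of_lt_of_le one_pos hs
  have h1 : s + 1 = s * (1 + 1/s) := by field_simp
  have hxpos : (0:ℝ) ≤ 1/s := by positivity
  have h2 : (1 + 1/s)^p ≤ 1 + p * (1/s) :=
    rpow_one_add_le_one_add_mul_self (by linarith) hp0 hp1
  have h3 : (1:ℝ) + p * (1/s) = (s+p)/s := by field_simp
  calc (s+1)^p = s^p * (1+1/s)^p := by
        rw [h1, Real.mul_rpow hs0.le (by positivity)]
    _ ≤ s^p * ((s+p)/s) := by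
        rw [← h3]; exact mul_le_mul_of_nonneg_left h2 (Real.rpow_nonneg hs0.le p)

lemma stmt2_L1 (p s : ℝ) (hp0 : 0 ≤ p) (hp1 : p ≤ 1) (hs : 1 ≤ s) :
    (1 - p/s) * (s+1)^p ≤ s^p := by
  have hs0 : (0:ℝ) < s := lt_of_lt_of_le one_pos hs
  have hps : p/s ≤ 1 := by rw [div_le_one hs0]; linarith
  have hA : (0:ℝ) ≤ s^p := Real.rpow_nonneg hs0.le p
  have hB := stmt2_bern p s hp0 hp1 hs
  calc (1 - p/s) * (s+1)^p ≤ (1 - p/s) * (s^p * ((s+p)/s)) :=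
        mul_le_mul_of_nonneg_left hB (by linarith)
    _ = s^p * ((s-p)*(s+p)/s^2) := by field_simp
    _ ≤ s^p * 1 := by
        apply mul_le_mul_of_nonneg_left _ hA
        rw [div_le_one (by positivity)]
        nlinarith [sq_nonneg p]
    _ = s^p := mul_one _

lemma stmt2_L2 (p s : ℝ) (hp0 : 0 < p) (hp1 : p < 1) (hs : 1 ≤ s) :
    (1-p) * (s+1)^(p-2) ≤ s^(p-1) - (s+1)^(p-1) := by
  have hs0 : (0:ℝ) < s := lt_of_lt_of_le one_pos hs
  have hs1 : (0:ℝ) < s + 1 := by linarith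
  have hB := stmt2_bern p s hp0.le hp1.le hs
  have hA : (0:ℝ) ≤ s^p := Real.rpow_nonneg hs0.le p
  have e1 : (s+1)^(p-2) = (s+1)^p / (s+1)^2 := by
    rw [Real.rpow_sub hs1, Real.rpow_two]
  have e2 : (s+1)^(p-1) = (s+1)^p / (s+1) := by
    rw [Real.rpow_sub hs1, Real.rpow_one]
  have e3 : s^(p-1) = s^p / s := by
    rw [Real.rpow_sub hs0, Real.rpow_one]
  rw [e1, e2, e3]
  have key : s^p / s - (1-p) * ((s+1)^p/(s+1)^2) - (s+1)^p/(s+1)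
      = (s^p * (s+1)^2 - (s+1)^p * s * (s + 2 - p)) / (s * (s+1)^2) := by
    field_simp; ring
  have hden : (0:ℝ) < s * (s+1)^2 := by positivity
  have h5 : (s+1)^p * (s+2-p) ≤ s^p*((s+p)/s)*(s+2-p) :=
    mul_le_mul_of_nonneg_right hB (by linarith)
  have h4 : (s+1)^p * s * (s+2-p) ≤ s^p * (s+p) * (s+2-p) := by
    have h6 := mul_le_mul_of_nonneg_right h5 hs0.le
    calc (s+1)^p * s * (s+2-p) = (s+1)^p * (s+2-p) * s := by ring
      _ ≤ s^p*((s+p)/s)*(s+2-p) * s := h6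
      _ = s^p * (s+p) * (s+2-p) := by field_simp
  have hnum : (0:ℝ) ≤ s^p * (s+1)^2 - (s+1)^p * s * (s + 2 - p) := by
    nlinarith [mul_nonneg hA (sq_nonneg (1-p))]
  have hpos := div_nonneg hnum hden.le
  linarith [key, hpos]


lemma stmt2_sum (p H : ℝ) (hp0 : 0 < p) (hp1 : p < 1) (hH : 1 ≤ H) : ∀ T : ℕ,
    ∑ t ∈ Finset.range (T+1), ((t:ℝ)+H+1)^p/((t:ℝ)+H)^2
      ≤ (H+1)^p/H^2 + ((H+2)/(H+1))^2/(1-p) * ((H+1)^(p-1) - ((T:ℝ)+H+1)^(p-1)) := by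
  intro T
  induction T with
  | zero =>
      rw [Finset.sum_range_one]
      norm_num
  | succ T ih =>
      rw [Finset.sum_range_succ]
      set s : ℝ := (T:ℝ) + H + 1 with hs_def
      have hs1 : 1 ≤ s := by
        have : (0:ℝ) ≤ (T:ℝ) := Nat.cast_nonneg T
        simp only [hs_def]; linarith
      have hsH : H + 1 ≤ s := by
        have : (0:ℝ) ≤ (T:ℝ) := Nat.cast_nonneg T
        simp only [hs_def]; linarith
      have hs0 : (0:ℝ) < s := by linarith
      have hcast : ((T+1:ℕ):ℝ) + H + 1 = s + 1 := by push_cast; simp only [hs_def]; ring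
      have hcast2 : ((T+1:ℕ):ℝ) + H = s := by push_cast; simp only [hs_def]; ring
      rw [hcast, hcast2]
      have hL2 := stmt2_L2 p s hp0 hp1 hs1
      have htel : (0:ℝ) ≤ s^(p-1) - (s+1)^(p-1) := by
        have : (0:ℝ) ≤ (1-p) * (s+1)^(p-2) := by
          have := Real.rpow_nonneg (by linarith : (0:ℝ) ≤ s+1) (p-2)
          nlinarith
        linarith
      -- bound the new term
      have hterm : (s+1)^p/s^2 ≤ ((H+2)/(H+1))^2/(1-p) * (s^(p-1) - (s+1)^(p-1)) := by
        have e1 : (s+1)^p/s^2 = ((s+1)/s)^2 * (s+1)^(p-2) := by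
          rw [Real.rpow_sub (by linarith : (0:ℝ) < s+1), Real.rpow_two]
          field_simp
        have hratio : (s+1)/s ≤ (H+2)/(H+1) := by
          rw [div_le_div_iff₀ hs0 (by linarith)]
          nlinarith
        have hratio0 : (0:ℝ) ≤ (s+1)/s := by positivity
        have hsq : ((s+1)/s)^2 ≤ ((H+2)/(H+1))^2 := by
          apply pow_le_pow_left₀ hratio0 hratio
        have hB2 : (0:ℝ) ≤ (s+1)^(p-2) := Real.rpow_nonneg (by linarith) _
        calc (s+1)^p/s^2 = ((s+1)/s)^2 * (s+1)^(p-2) := e1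
          _ ≤ ((H+2)/(H+1))^2 * (s+1)^(p-2) := mul_le_mul_of_nonneg_right hsq hB2
          _ ≤ ((H+2)/(H+1))^2 * ((s^(p-1) - (s+1)^(p-1))/(1-p)) := by
              apply mul_le_mul_of_nonneg_left _ (by positivity : (0:ℝ) ≤ ((H+2)/(H+1))^2)
              rw [le_div_iff₀ (by linarith : (0:ℝ) < 1-p)]
              linarith [hL2]
          _ = ((H+2)/(H+1))^2/(1-p) * (s^(p-1) - (s+1)^(p-1)) := by ring
      have hM : (0:ℝ) ≤ ((H+2)/(H+1))^2/(1-p) := div_nonneg (by positivity) (by linarith)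
      nlinarith [ih, hterm, mul_nonneg hM htel]


theorem stmt2 (w : ℕ → ℝ) (k C α : ℝ) (h : ℕ) (hk : 0 < k) (hC : 0 ≤ C)
    (hα : 0 < α) (hh : 1 ≤ h) (hkα : k * α < 1)
    (hsmall : ∀ t : ℕ, k * (α / ((t : ℝ) + h)) < 1)
    (hw : ∀ t, 0 ≤ w t)
    (hrec : ∀ t : ℕ, w (t + 1) ≤ (1 - k * (α / ((t : ℝ) + h))) * w t
      + C * (α / ((t : ℝ) + h)) ^ 2) :
    ∀ T : ℕ, w (T + 1) ≤
      (w 0 + (C * α ^ 2 / (h : ℝ) ^ 2) * (((h : ℝ) + 2 - k * α) / (1 - k * α))) *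
        (((h : ℝ) + 1) / ((h : ℝ) + T + 1)) ^ (k * α) := by
  set p : ℝ := k * α with hp_def
  set H : ℝ := (h : ℝ) with hH_def
  have hH : 1 ≤ H := by simp only [hH_def]; exact_mod_cast hh
  have hH0 : (0:ℝ) < H := by linarith
  have hp0 : 0 < p := mul_pos hk hα
  have hp1 : p < 1 := hkα
  have hCα : (0:ℝ) ≤ C * α ^ 2 := by positivity
  -- main recursion, multiplied through by (T+H+1)^p
  have main : ∀ T : ℕ, w (T+1) * ((T:ℝ)+H+1)^p
      ≤ w 0 * H^p + C*α^2 * ∑ t ∈ Finset.range (T+1), ((t:ℝ)+H+1)^p/((t:ℝ)+H)^2 := by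
    intro T
    induction T with
    | zero =>
        have h0 := hrec 0
        have e0 : k * (α / ((0:ℕ) + H)) = p / H := by
          push_cast; rw [hp_def]; ring
        have hmul : w 1 * (H+1)^p ≤ ((1 - p/H) * w 0 + C*α^2/H^2) * (H+1)^p := by
          apply mul_le_mul_of_nonneg_right _ (Real.rpow_nonneg (by linarith) p)
          calc w 1 ≤ (1 - k * (α / ((0:ℕ) + H))) * w 0 + C * (α / ((0:ℕ) + H)) ^ 2 := h0
            _ = (1 - p/H) * w 0 + C*α^2/H^2 := by
                rw [e0]; push_cast; rw [div_pow]; ring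
        have hL1 := stmt2_L1 p H hp0.le hp1.le hH
        have hw0 := hw 0
        rw [Finset.sum_range_one]
        have : ((0:ℕ):ℝ) + H + 1 = H + 1 := by push_cast; ring
        rw [this]
        have h1 : (1 - p/H) * w 0 * (H+1)^p ≤ H^p * w 0 := by
          calc (1 - p/H) * w 0 * (H+1)^p = ((1 - p/H) * (H+1)^p) * w 0 := by ring
            _ ≤ H^p * w 0 := mul_le_mul_of_nonneg_right hL1 hw0
        have e2 : ((0:ℕ):ℝ) + H = H := by push_cast; ring
        rw [e2]
        show w 1 * (H+1)^p ≤ w 0 * H^p + C*α^2 * ((H+1)^p/H^2)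
        calc w 1 * (H+1)^p ≤ ((1 - p/H) * w 0 + C*α^2/H^2) * (H+1)^p := hmul
          _ = (1 - p/H) * w 0 * (H+1)^p + C*α^2/H^2*(H+1)^p := by ring
          _ ≤ H^p * w 0 + C*α^2/H^2*(H+1)^p := by linarith [h1]
          _ = w 0 * H^p + C*α^2 * ((H+1)^p/H^2) := by ring
    | succ T ih =>
        set s : ℝ := (T:ℝ) + H + 1 with hs_def
        have hTn : (0:ℝ) ≤ (T:ℝ) := Nat.cast_nonneg T
        have hs1 : 1 ≤ s := by simp only [hs_def]; linarith
        have hs0 : (0:ℝ) < s := by linarith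
        have hrecT := hrec (T+1)
        have ecast : ((T+1:ℕ):ℝ) + H = s := by push_cast; simp only [hs_def]; ring
        have ecast2 : ((T+1:ℕ):ℝ) + H + 1 = s + 1 := by push_cast; simp only [hs_def]; ring
        rw [ecast] at hrecT
        have hmul : w (T+1+1) * (s+1)^p ≤ ((1 - p/s) * w (T+1) + C*α^2/s^2) * (s+1)^p := by
          apply mul_le_mul_of_nonneg_right _ (Real.rpow_nonneg (by linarith) p)
          calc w (T+1+1) ≤ (1 - k * (α / s)) * w (T+1) + C * (α / s) ^ 2 := hrecT
            _ = (1 - p/s) * w (T+1) + C*α^2/s^2 := by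
                rw [hp_def, div_pow]; ring
        have hL1 := stmt2_L1 p s hp0.le hp1.le hs1
        have hwT := hw (T+1)
        have h1 : (1 - p/s) * w (T+1) * (s+1)^p ≤ s^p * w (T+1) := by
          calc (1 - p/s) * w (T+1) * (s+1)^p = ((1 - p/s) * (s+1)^p) * w (T+1) := by ring
            _ ≤ s^p * w (T+1) := mul_le_mul_of_nonneg_right hL1 hwT
        rw [Finset.sum_range_succ, ecast]
        have hIH : s^p * w (T+1) ≤ w 0 * H^p + C*α^2 * ∑ t ∈ Finset.range (T+1), ((t:ℝ)+H+1)^p/((t:ℝ)+H)^2 := by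
          calc s^p * w (T+1) = w (T+1) * ((T:ℝ)+H+1)^p := by rw [← hs_def]; ring
            _ ≤ _ := ih
        show w (T+1+1) * (s+1)^p ≤ w 0 * H^p
            + C*α^2 * ((∑ t ∈ Finset.range (T+1), ((t:ℝ)+H+1)^p/((t:ℝ)+H)^2) + (s+1)^p/s^2)
        calc w (T+1+1) * (s+1)^p ≤ ((1 - p/s) * w (T+1) + C*α^2/s^2) * (s+1)^p := hmul
          _ = (1 - p/s) * w (T+1) * (s+1)^p + C*α^2/s^2*(s+1)^p := by ring
          _ ≤ s^p * w (T+1) + C*α^2/s^2*(s+1)^p := by linarith [h1]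
          _ ≤ (w 0 * H^p + C*α^2 * ∑ t ∈ Finset.range (T+1), ((t:ℝ)+H+1)^p/((t:ℝ)+H)^2)
              + C*α^2/s^2*(s+1)^p := by linarith [hIH]
          _ = w 0 * H^p
              + C*α^2 * ((∑ t ∈ Finset.range (T+1), ((t:ℝ)+H+1)^p/((t:ℝ)+H)^2) + (s+1)^p/s^2) := by ring
  intro T
  -- bound the sum
  have hsum := stmt2_sum p H hp0 hp1 hH T
  have hspos : (0:ℝ) < ((T:ℝ)+H+1)^(p-1) :=
    Real.rpow_pos_of_pos (by positivity) _
  have hM : (0:ℝ) ≤ ((H+2)/(H+1))^2/(1-p) := div_nonneg (by positivity) (by linarith)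
  have hsum2 : ∑ t ∈ Finset.range (T+1), ((t:ℝ)+H+1)^p/((t:ℝ)+H)^2
      ≤ (H+1)^p/H^2 + ((H+2)/(H+1))^2/(1-p) * (H+1)^(p-1) := by
    have := mul_le_mul_of_nonneg_left (le_of_lt hspos) hM
    nlinarith [hsum, mul_nonneg hM hspos.le]
  -- constant bound
  have hQ : (0:ℝ) < (H+1)^p := Real.rpow_pos_of_pos (by linarith) p
  have eQ : (H+1)^(p-1) = (H+1)^p / (H+1) := by
    rw [Real.rpow_sub (by linarith), Real.rpow_one]
  have h1p : (1:ℝ) - p ≠ 0 := by linarith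
  have hHne : H ≠ 0 := by linarith
  have hH1ne : H + 1 ≠ 0 := by linarith
  have hK : (H+1)^p/H^2 + ((H+2)/(H+1))^2/(1-p) * (H+1)^(p-1)
      ≤ (H+1)^p * ((H+2-p)/(1-p)) / H^2 := by
    rw [eQ, ← sub_nonneg]
    have expand : (H+1)^p * ((H+2-p)/(1-p)) / H^2
        - ((H+1)^p/H^2 + ((H+2)/(H+1))^2/(1-p) * ((H+1)^p/(H+1)))
        = (H+1)^p * (((H+1)^4 - (H+2)^2*H^2) / (H^2 * (1-p) * (H+1)^3)) := by
      field_simp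
      ring
    rw [expand]
    apply mul_nonneg hQ.le
    have hD : (0:ℝ) < H^2*(1-p)*(H+1)^3 :=
      mul_pos (mul_pos (by positivity) (by linarith)) (by positivity)
    apply div_nonneg _ hD.le
    nlinarith [hH]
  -- assemble
  have hX : w (T+1) * ((T:ℝ)+H+1)^p
      ≤ (w 0 + C*α^2/H^2 * ((H+2-p)/(1-p))) * (H+1)^p := by
    have hm := main T
    have hHp : H^p ≤ (H+1)^p := Real.rpow_le_rpow hH0.le (by linarith) hp0.le
    have hw0b : w 0 * H^p ≤ w 0 * (H+1)^p := mul_le_mul_of_nonneg_left hHp (hw 0)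
    have hsb : C*α^2 * (∑ t ∈ Finset.range (T+1), ((t:ℝ)+H+1)^p/((t:ℝ)+H)^2)
        ≤ C*α^2 * ((H+1)^p * ((H+2-p)/(1-p)) / H^2) :=
      mul_le_mul_of_nonneg_left (hsum2.trans hK) hCα
    calc w (T+1) * ((T:ℝ)+H+1)^p
        ≤ w 0 * H^p + C*α^2 * ∑ t ∈ Finset.range (T+1), ((t:ℝ)+H+1)^p/((t:ℝ)+H)^2 := hm
      _ ≤ w 0 * (H+1)^p + C*α^2 * ((H+1)^p * ((H+2-p)/(1-p)) / H^2) := by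
          linarith [hw0b, hsb]
      _ = (w 0 + C*α^2/H^2 * ((H+2-p)/(1-p))) * (H+1)^p := by ring
  have hTH : (0:ℝ) < (T:ℝ)+H+1 := by positivity
  have hrp : (0:ℝ) < ((T:ℝ)+H+1)^p := Real.rpow_pos_of_pos hTH p
  have hdiv : w (T+1) ≤ (w 0 + C*α^2/H^2 * ((H+2-p)/(1-p))) * (H+1)^p / ((T:ℝ)+H+1)^p :=
    (le_div_iff₀ hrp).mpr hX
  have efin : (w 0 + C*α^2/H^2 * ((H+2-p)/(1-p))) * (H+1)^p / ((T:ℝ)+H+1)^p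
      = (w 0 + C*α^2/H^2 * ((H+2-p)/(1-p))) * ((H+1)/(H+(T:ℝ)+1))^p := by
    rw [show H + (T:ℝ) + 1 = (T:ℝ)+H+1 by ring,
      Real.div_rpow (by linarith) hTH.le, mul_div_assoc]
  rw [efin] at hdiv
  exact hdiv
end

section
/- Let λ ∈ ℝ^n with all entries positive, Λ = Diag(λ), and let F : Z → ℝ^n be a continuously differentiable map on a convex open set Z ⊆ ℝ^n. If Λ·∇F(z) + ∇F(z)^T·Λ ⪰ 2μI for all z ∈ Z (where ∇F is the Jacobian), then for all z, z' ∈ Z: ⟨z - z', F(z) - F(z')⟩_λ ≥ μ·‖z - z'‖₂², where ⟨x,y⟩_λ = ∑ᵢ λᵢ xᵢ yᵢ. Conversely, if this strong monotonicity inequality holds for all z, z' ∈ Z, then Λ·∇F(z) + ∇F(z)^T·Λ ⪰ 2μI for all z ∈ Z. -/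
open Matrix

private lemma quad_eq {n : ℕ} (lam : Fin n → ℝ) (M : Matrix (Fin n) (Fin n) ℝ)
    (v : Fin n → ℝ) :
    v ⬝ᵥ ((Matrix.diagonal lam * M + Mᵀ * Matrix.diagonal lam) *ᵥ v)
      = 2 * ∑ i, lam i * v i * ((M *ᵥ v) i) := by
  have h1 : v ⬝ᵥ ((Matrix.diagonal lam * M) *ᵥ v) = ∑ i, lam i * v i * ((M *ᵥ v) i) := by
    rw [← Matrix.mulVec_mulVec]
    simp [Matrix.mulVec_diagonal, dotProduct]
    apply Finset.sum_congr rfl; intro i _; ring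
  have h2 : v ⬝ᵥ ((Mᵀ * Matrix.diagonal lam) *ᵥ v) = ∑ i, lam i * v i * ((M *ᵥ v) i) := by
    rw [← Matrix.mulVec_mulVec, Matrix.dotProduct_mulVec, Matrix.vecMul_transpose]
    simp [Matrix.mulVec_diagonal, dotProduct]
    apply Finset.sum_congr rfl; intro i _; ring
  rw [Matrix.add_mulVec, dotProduct_add, h1, h2]; ring

private lemma psi_deriv {n : ℕ} {Z : Set (Fin n → ℝ)} (lam : Fin n → ℝ)
    {F : (Fin n → ℝ) → (Fin n → ℝ)} {J : (Fin n → ℝ) → Matrix (Fin n) (Fin n) ℝ}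
    (hF : ∀ z ∈ Z, HasFDerivAt F (LinearMap.toContinuousLinearMap (Matrix.toLin' (J z))) z)
    (a v : Fin n → ℝ) (t : ℝ) (hw : a + t • v ∈ Z) :
    HasDerivAt (fun s => ∑ i, lam i * v i * F (a + s • v) i)
      (∑ i, lam i * v i * ((J (a + t • v) *ᵥ v) i)) t := by
  have hγ : HasDerivAt (fun s : ℝ => a + s • v) v t := by
    simpa using ((hasDerivAt_id t).smul_const v).const_add a
  have hFc : HasDerivAt (fun s => F (a + s • v)) (J (a + t • v) *ᵥ v) t := by
    have := (hF _ hw).comp_hasDerivAt t hγ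
    simpa [Matrix.toLin'_apply, Function.comp_def] using this
  exact HasDerivAt.fun_sum fun i _ => ((hasDerivAt_pi.1 hFc) i).const_mul (lam i * v i)

private lemma icc_aux (f f' : ℝ → ℝ) (hf : ∀ t ∈ Set.Icc (0:ℝ) 1, HasDerivAt f (f' t) t)
    (h0 : ∀ t ∈ Set.Icc (0:ℝ) 1, 0 ≤ f' t) : f 0 ≤ f 1 := by
  have := monotoneOn_of_deriv_nonneg (convex_Icc (0:ℝ) 1)
    (fun t ht => (hf t ht).continuousAt.continuousWithinAt)
    (fun t ht => ((hf t (interior_subset ht)).differentiableAt).differentiableWithinAt)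
    (fun t ht => by rw [(hf t (interior_subset ht)).deriv]; exact h0 t (interior_subset ht))
  exact this (Set.left_mem_Icc.2 zero_le_one) (Set.right_mem_Icc.2 zero_le_one) zero_le_one

theorem stmt5 (n : ℕ) (Z : Set (Fin n → ℝ)) (hZo : IsOpen Z) (hZc : Convex ℝ Z)
    (lam : Fin n → ℝ) (hlam : ∀ i, 0 < lam i) (μ : ℝ)
    (F : (Fin n → ℝ) → (Fin n → ℝ)) (J : (Fin n → ℝ) → Matrix (Fin n) (Fin n) ℝ)
    (hF : ∀ z ∈ Z, HasFDerivAt F (LinearMap.toContinuousLinearMap (Matrix.toLin' (J z))) z)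
    (hJc : ContinuousOn J Z) :
    (∀ z ∈ Z, ∀ v : Fin n → ℝ,
        2 * μ * (∑ i, v i ^ 2) ≤
          v ⬝ᵥ ((Matrix.diagonal lam * J z + (J z)ᵀ * Matrix.diagonal lam) *ᵥ v)) ↔
    (∀ z ∈ Z, ∀ z' ∈ Z,
        μ * (∑ i, (z i - z' i) ^ 2) ≤ ∑ i, lam i * (z i - z' i) * (F z i - F z' i)) := by
  constructor
  · intro h z hz z' hz'
    set v : Fin n → ℝ := fun i => z i - z' i with hv
    have hvv : v = z - z' := by funext i; simp [hv]
    set c : ℝ := μ * ∑ i, v i ^ 2 with hc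
    -- points on the segment are in Z
    have hmem : ∀ t ∈ Set.Icc (0:ℝ) 1, z' + t • v ∈ Z := by
      intro t ht
      have : (1 - t) • z' + t • z ∈ Z := hZc hz' hz (by linarith [ht.2]) ht.1 (by ring)
      convert this using 1
      funext i; simp [hv]; ring
    set ψ : ℝ → ℝ := fun s => ∑ i, lam i * v i * F (z' + s • v) i with hψ
    set φ : ℝ → ℝ := fun s => ψ s - c * s with hφ
    have hd : ∀ t ∈ Set.Icc (0:ℝ) 1,
        HasDerivAt φ ((∑ i, lam i * v i * ((J (z' + t • v) *ᵥ v) i)) - c) t := by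
      intro t ht
      exact (psi_deriv lam hF z' v t (hmem t ht)).sub
        (by simpa using (hasDerivAt_id t).const_mul c)
    have hnn : ∀ t ∈ Set.Icc (0:ℝ) 1,
        0 ≤ (∑ i, lam i * v i * ((J (z' + t • v) *ᵥ v) i)) - c := by
      intro t ht
      have h1 := h _ (hmem t ht) v
      rw [quad_eq] at h1
      simp only [hc]
      linarith
    have hmono := icc_aux φ _ hd hnn
    have hψ0 : ψ 0 = ∑ i, lam i * v i * F z' i := by
      simp [hψ]
    have hψ1 : ψ 1 = ∑ i, lam i * v i * F z i := by
      simp only [hψ]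
      rw [show z' + (1:ℝ) • v = z by funext i; simp [hv]]
    have : c ≤ ψ 1 - ψ 0 := by
      simp only [hφ] at hmono
      linarith [hmono]
    rw [hψ0, hψ1] at this
    calc μ * (∑ i, (z i - z' i) ^ 2) = c := by rw [hc]
      _ ≤ (∑ i, lam i * v i * F z i) - ∑ i, lam i * v i * F z' i := this
      _ = ∑ i, lam i * (z i - z' i) * (F z i - F z' i) := by
          rw [← Finset.sum_sub_distrib]
          apply Finset.sum_congr rfl; intro i _; simp [hv]; ring
  · intro h z hz v
    set ψ : ℝ → ℝ := fun s => ∑ i, lam i * v i * F (z + s • v) i with hψ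
    set D : ℝ := ∑ i, lam i * v i * ((J z *ᵥ v) i) with hD
    have hDd : HasDerivAt ψ D 0 := by
      have := psi_deriv lam hF z v 0 (by simpa using hz)
      simpa using this
    set S : ℝ := ∑ i, v i ^ 2 with hS
    have key : μ * S ≤ D := by
      obtain ⟨ε, hε, hball⟩ := Metric.isOpen_iff.1 hZo z hz
      set δ : ℝ := ε / (‖v‖ + 1) with hδ
      have hδpos : 0 < δ := div_pos hε (by positivity)
      have hmem : ∀ t ∈ Set.Ioo (0:ℝ) δ, z + t • v ∈ Z := by
        intro t ht
        apply hball
        have : dist (z + t • v) z = ‖t • v‖ := by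
          rw [dist_eq_norm]; congr 1; funext i; simp
        rw [Metric.mem_ball, this, norm_smul, Real.norm_eq_abs, abs_of_pos ht.1]
        calc t * ‖v‖ ≤ t * (‖v‖ + 1) := by nlinarith [ht.1]
          _ < δ * (‖v‖ + 1) := by nlinarith [ht.2, ht.1, norm_nonneg v]
          _ = ε := by rw [hδ]; field_simp
      have hslope : ∀ t ∈ Set.Ioo (0:ℝ) δ, μ * S ≤ slope ψ 0 t := by
        intro t ht
        have h2 := h z hz (z + t • v) (hmem t ht)
        have hL : (∑ i, (z i - (z + t • v) i) ^ 2) = t ^ 2 * S := by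
          rw [hS, Finset.mul_sum]
          apply Finset.sum_congr rfl; intro i _; simp; ring
        have hR : (∑ i, lam i * (z i - (z + t • v) i) * (F z i - F (z + t • v) i))
            = t * (ψ t - ψ 0) := by
          simp only [hψ]
          rw [← Finset.sum_sub_distrib, Finset.mul_sum]
          apply Finset.sum_congr rfl; intro i _; simp; ring
        rw [hL, hR] at h2
        rw [slope_def_field, sub_zero, le_div_iff₀ ht.1]
        nlinarith [ht.1, h2]
      have htend : Filter.Tendsto (slope ψ 0) (nhdsWithin 0 (Set.Ioi 0)) (nhds D) :=
        (hasDerivAt_iff_tendsto_slope.1 hDd).mono_left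
          (nhdsWithin_mono 0 fun x hx => ne_of_gt hx)
      have hev : ∀ᶠ t in nhdsWithin (0:ℝ) (Set.Ioi 0), μ * S ≤ slope ψ 0 t := by
        filter_upwards [Ioo_mem_nhdsGT_of_mem ⟨le_refl (0:ℝ), hδpos⟩] with t ht
        exact hslope t ht
      exact ge_of_tendsto htend hev
    have h1 : 2 * D = v ⬝ᵥ ((Matrix.diagonal lam * J z + (J z)ᵀ * Matrix.diagonal lam) *ᵥ v) := by
      rw [quad_eq, hD]
    linarith [key]
end

section
/- Consider a two-player game where each player i ∈ {1,2} minimizes a payoff-plus-regularizer objective, with regularizers ν_i(π) = -∑_a log π(a) (log-barrier) over the simplex Δ_{A_i}. Suppose π* is a minimizer of π ↦ -π^T v + ε·ν(π) over the interior of the simplex Δ_m for a vector v ∈ ℝ^m and ε > 0. Then for every coordinate a, π*(a) ≥ ε/(ε·m + (max_a v(a) - min_a v(a))). -/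
open Finset Filter

theorem stmt12 (m : ℕ) (hm : 0 < m) (v : Fin m → ℝ) (ε : ℝ) (hε : 0 < ε)
    (πs : Fin m → ℝ) (hpos : ∀ a, 0 < πs a) (hsum : ∑ a, πs a = 1)
    (hmin : ∀ π : Fin m → ℝ, (∀ a, 0 < π a) → ∑ a, π a = 1 →
      (-∑ a, πs a * v a) + ε * ∑ a, -Real.log (πs a) ≤
        (-∑ a, π a * v a) + ε * ∑ a, -Real.log (π a)) :
    ∀ a, ε / (ε * m + ((Finset.univ.sup' ⟨⟨0, hm⟩, Finset.mem_univ _⟩ v) -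
      (Finset.univ.inf' ⟨⟨0, hm⟩, Finset.mem_univ _⟩ v))) ≤ πs a := by
  have key : ∀ a b : Fin m, v a + ε / πs a = v b + ε / πs b := by
    intro a b
    rcases eq_or_ne a b with rfl | hab
    · rfl
    have hδpos : 0 < min (πs a) (πs b) := lt_min (hpos a) (hpos b)
    set φ : ℝ → ℝ := fun t => t * (v b - v a) +
      ε * ((Real.log (πs a) - Real.log (πs a + t)) +
        (Real.log (πs b) - Real.log (πs b - t))) with hφ
    have hmin0 : IsLocalMin φ 0 := by
      have hev : ∀ᶠ t in nhds (0:ℝ), |t - 0| < min (πs a) (πs b) :=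
        eventually_abs_sub_lt 0 hδpos
      filter_upwards [hev] with t ht
      simp only [sub_zero] at ht
      obtain ⟨ht1, ht2⟩ := abs_lt.mp ht
      set p : Fin m → ℝ := fun c => if c = a then πs a + t else if c = b then πs b - t else πs c with hπ
      have hπpos : ∀ c, 0 < p c := by
        intro c
        simp only [hπ]
        split_ifs with h1 h2
        · have : -(πs a) < t := lt_of_le_of_lt (neg_le_neg (min_le_left _ _)) ht1
          linarith
        · have : t < πs b := lt_of_lt_of_le ht2 (min_le_right _ _)
          linarith
        · exact hpos c
      have hkey : ∀ c, p c = πs c + (if c = a then t else 0) + (if c = b then -t else 0) := by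
        intro c
        by_cases h1 : c = a
        · subst h1; simp [hπ, hab]
        · by_cases h2 : c = b
          · subst h2; simp [hπ, h1]; ring
          · simp [hπ, h1, h2]
      have hsum' : ∑ c, p c = 1 := by
        simp only [hkey]
        rw [Finset.sum_add_distrib, Finset.sum_add_distrib, hsum,
          Finset.sum_ite_eq', Finset.sum_ite_eq']
        simp
      have hval : ∑ c, p c * v c = ∑ c, πs c * v c + (t * v a - t * v b) := by
        have : ∀ c, p c * v c = πs c * v c + (if c = a then t * v a else 0)
            + (if c = b then -(t * v b) else 0) := by
          intro c
          by_cases h1 : c = a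
          · subst h1; simp [hπ, hab]; ring
          · by_cases h2 : c = b
            · subst h2; simp [hπ, h1]; ring
            · simp [hπ, h1, h2]
        simp only [this]
        rw [Finset.sum_add_distrib, Finset.sum_add_distrib,
          Finset.sum_ite_eq', Finset.sum_ite_eq']
        simp; ring
      have hlog : ∑ c, -Real.log (p c) = ∑ c, -Real.log (πs c) +
          ((Real.log (πs a) - Real.log (πs a + t)) +
            (Real.log (πs b) - Real.log (πs b - t))) := by
        have : ∀ c, -Real.log (p c) = -Real.log (πs c)
            + (if c = a then Real.log (πs a) - Real.log (πs a + t) else 0)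
            + (if c = b then Real.log (πs b) - Real.log (πs b - t) else 0) := by
          intro c
          by_cases h1 : c = a
          · subst h1; simp [hπ, hab]; ring
          · by_cases h2 : c = b
            · subst h2; simp [hπ, h1]; ring
            · simp [hπ, h1, h2]
        simp only [this]
        rw [Finset.sum_add_distrib, Finset.sum_add_distrib,
          Finset.sum_ite_eq', Finset.sum_ite_eq']
        simp; ring
      have h := hmin p hπpos hsum'
      rw [hval, hlog] at h
      have hφ0 : φ 0 = 0 := by simp [hφ]
      rw [hφ0]
      simp only [hφ]
      nlinarith [h]
    have hane : πs a ≠ 0 := (hpos a).ne'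
    have hbne : πs b ≠ 0 := (hpos b).ne'
    have hd1 : HasDerivAt (fun t : ℝ => Real.log (πs a + t)) (1 / πs a) 0 := by
      have h := (HasDerivAt.const_add (πs a) (hasDerivAt_id (0:ℝ))).log
        (by simpa using hane)
      simpa using h
    have hd2 : HasDerivAt (fun t : ℝ => Real.log (πs b - t)) (-(1 / πs b)) 0 := by
      have h := (HasDerivAt.const_sub (πs b) (hasDerivAt_id (0:ℝ))).log
        (by simpa using hbne)
      simpa [neg_div] using h
    have hdφ : HasDerivAt φ ((v b - v a) + ε * (-(1 / πs a) + -(-(1 / πs b)))) 0 := by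
      exact (hasDerivAt_mul_const (v b - v a)).add
        ((((hd1.const_sub (Real.log (πs a)))).add (hd2.const_sub (Real.log (πs b)))).const_mul ε)
    have heq := hmin0.hasDerivAt_eq_zero hdφ
    have h1 : ε * (1 / πs a) = ε / πs a := by ring
    have h2 : ε * (1 / πs b) = ε / πs b := by ring
    nlinarith [heq, h1, h2]
  -- now the multiplier bound
  intro a
  obtain ⟨μ, hμ⟩ : ∃ μ : ℝ, ∀ c, μ - v c = ε / πs c := by
    refine ⟨v ⟨0, hm⟩ + ε / πs ⟨0, hm⟩, fun c => ?_⟩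
    have := key ⟨0, hm⟩ c
    rw [this]; ring
  obtain ⟨b, hb⟩ : ∃ b : Fin m, (1:ℝ)/m ≤ πs b := by
    by_contra h
    push_neg at h
    have hlt : ∑ c, πs c < ∑ _c : Fin m, (1:ℝ)/m :=
      Finset.sum_lt_sum_of_nonempty ⟨⟨0, hm⟩, Finset.mem_univ _⟩ (fun c _ => h c)
    rw [hsum, Finset.sum_const, Finset.card_univ, Fintype.card_fin] at hlt
    have hm' : (0:ℝ) < m := by exact_mod_cast hm
    rw [nsmul_eq_mul] at hlt
    rw [mul_one_div, div_self hm'.ne'] at hlt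
    exact lt_irrefl _ hlt
  have hm' : (0:ℝ) < m := by exact_mod_cast hm
  have hbpos := hpos b
  have hμb : μ ≤ v b + ε * m := by
    have h1 : μ - v b = ε / πs b := hμ b
    have h2 : ε / πs b ≤ ε * m := by
      rw [div_le_iff₀ hbpos]
      calc ε = ε * m * (1/m) := by field_simp
        _ ≤ ε * m * πs b := by
            apply mul_le_mul_of_nonneg_left hb (by positivity)
    linarith
  have hsup : v b ≤ Finset.univ.sup' ⟨⟨0, hm⟩, Finset.mem_univ _⟩ v :=
    Finset.le_sup' v (Finset.mem_univ b)
  have hinf : Finset.univ.inf' ⟨⟨0, hm⟩, Finset.mem_univ _⟩ v ≤ v a :=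
    Finset.inf'_le v (Finset.mem_univ a)
  set S := Finset.univ.sup' ⟨⟨0, hm⟩, Finset.mem_univ _⟩ v
  set I := Finset.univ.inf' ⟨⟨0, hm⟩, Finset.mem_univ _⟩ v
  have hSI : I ≤ S := le_trans (Finset.inf'_le v (Finset.mem_univ ⟨0, hm⟩))
    (Finset.le_sup' v (Finset.mem_univ ⟨0, hm⟩))
  clear_value S I
  have hDpos : 0 < ε * m + (S - I) := by nlinarith
  have hbound : ε / πs a ≤ ε * m + (S - I) := by
    have h1 : μ - v a = ε / πs a := hμ a
    linarith
  rw [div_le_iff₀ (hpos a)] at hbound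
  rw [div_le_iff₀ hDpos]
  nlinarith [hpos a]
end

section
/- Let R₁, R₂ be m₁×m₂ and m₂×m₁ real matrices (payoff matrices of a two-player game), ε₁, ε₂, τ₁, τ₂ > 0, ν_i twice differentiable convex regularizers, and D_i twice differentiable jointly convex penalties. Define the gradient operator F(z) of the 4-player game with components F_{π_i}(z) = -R_i p_i + ε_i ∇ν_i(π_i) and F_{p_i}(z) = R_i^T π_i + (1/τ_i)∇_p D_i(p_i, π_{-i}). Then for Λ = Diag(λ₁·1, λ₂·1, λ₁·1, λ₂·1) with λ₁, λ₂ > 0, the symmetrized Jacobian Λ∇F(z) + ∇F(z)^T Λ has no dependence on R₁ or R₂: the payoff-matrix blocks cancel, and after permuting block rows/columns it is block-diagonal with blocks M_i(λ,z) = [[2λ_i ε_i ∇²ν_i, (λ_{-i}/τ_{-i})∇²_{pπ}D_{-i}], [(λ_{-i}/τ_{-i})∇²_{pπ}D_{-i}, 2(λ_{-i}/τ_{-i})∇²_p D_{-i}]] for i ∈ {1,2}. -/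
open Matrix

/-- Permutation regrouping the variables `(π₁, π₂, p₁, p₂)` of the 4-player game into
the pairs `(π₁, p₂)` and `(π₂, p₁)`. -/
def regroup (m₁ m₂ : ℕ) :
    ((Fin m₁ ⊕ Fin m₁) ⊕ (Fin m₂ ⊕ Fin m₂)) ≃ ((Fin m₁ ⊕ Fin m₂) ⊕ (Fin m₂ ⊕ Fin m₁)) where
  toFun x :=
    match x with
    | .inl (.inl i) => .inl (.inl i)
    | .inl (.inr i) => .inr (.inr i)
    | .inr (.inl i) => .inl (.inr i)
    | .inr (.inr i) => .inr (.inl i)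
  invFun x :=
    match x with
    | .inl (.inl i) => .inl (.inl i)
    | .inl (.inr i) => .inr (.inl i)
    | .inr (.inl i) => .inr (.inr i)
    | .inr (.inr i) => .inl (.inr i)
  left_inv := by rintro ((i | i) | (i | i)) <;> rfl
  right_inv := by rintro ((i | i) | (i | i)) <;> rfl

/-- The symmetrized, λ-weighted Jacobian of the 4-player game gradient operator does not
depend on the payoff matrices `R₁, R₂`, and after permuting block rows/columns it is
block diagonal with blocks `M₁, M₂`.  Here `A_i = ∇²ν_i`, `B_i = ∇²_{pπ}D_i`,
`C_i = ∇²_p D_i` (all symmetric). -/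
theorem stmt15 (m₁ m₂ : ℕ)
    (R₁ : Matrix (Fin m₁) (Fin m₂) ℝ) (R₂ : Matrix (Fin m₂) (Fin m₁) ℝ)
    (ε₁ ε₂ τ₁ τ₂ lam₁ lam₂ : ℝ)
    (hε₁ : 0 < ε₁) (hε₂ : 0 < ε₂) (hτ₁ : 0 < τ₁) (hτ₂ : 0 < τ₂)
    (hlam₁ : 0 < lam₁) (hlam₂ : 0 < lam₂)
    (A₁ B₂ C₂ : Matrix (Fin m₁) (Fin m₁) ℝ)
    (A₂ B₁ C₁ : Matrix (Fin m₂) (Fin m₂) ℝ)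
    (hA₁ : A₁ᵀ = A₁) (hA₂ : A₂ᵀ = A₂) (hB₁ : B₁ᵀ = B₁) (hB₂ : B₂ᵀ = B₂)
    (hC₁ : C₁ᵀ = C₁) (hC₂ : C₂ᵀ = C₂)
    -- the Jacobian ∇F of the 4-player gradient operator, in variables (π₁, π₂, p₁, p₂)
    (J : Matrix ((Fin m₁ ⊕ Fin m₂) ⊕ (Fin m₂ ⊕ Fin m₁))
        ((Fin m₁ ⊕ Fin m₂) ⊕ (Fin m₂ ⊕ Fin m₁)) ℝ)
    (hJ : J = Matrix.fromBlocks
        (Matrix.fromBlocks (ε₁ • A₁) 0 0 (ε₂ • A₂))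
        (Matrix.fromBlocks (-R₁) 0 0 (-R₂))
        (Matrix.fromBlocks R₁ᵀ (τ₁⁻¹ • B₁) (τ₂⁻¹ • B₂) R₂ᵀ)
        (Matrix.fromBlocks (τ₁⁻¹ • C₁) 0 0 (τ₂⁻¹ • C₂)))
    -- Λ = Diag(λ₁·1, λ₂·1, λ₁·1, λ₂·1)
    (Λ : Matrix ((Fin m₁ ⊕ Fin m₂) ⊕ (Fin m₂ ⊕ Fin m₁))
        ((Fin m₁ ⊕ Fin m₂) ⊕ (Fin m₂ ⊕ Fin m₁)) ℝ)
    (hΛ : Λ = Matrix.fromBlocks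
        (Matrix.fromBlocks (lam₁ • (1 : Matrix (Fin m₁) (Fin m₁) ℝ)) 0 0
          (lam₂ • (1 : Matrix (Fin m₂) (Fin m₂) ℝ)))
        0 0
        (Matrix.fromBlocks (lam₁ • (1 : Matrix (Fin m₂) (Fin m₂) ℝ)) 0 0
          (lam₂ • (1 : Matrix (Fin m₁) (Fin m₁) ℝ)))) :
    (Λ * J + Jᵀ * Λ).submatrix (regroup m₁ m₂) (regroup m₁ m₂) =
      Matrix.fromBlocks
        (Matrix.fromBlocks ((2 * lam₁ * ε₁) • A₁) ((lam₂ / τ₂) • B₂)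
          ((lam₂ / τ₂) • B₂) ((2 * lam₂ / τ₂) • C₂))
        0 0
        (Matrix.fromBlocks ((2 * lam₂ * ε₂) • A₂) ((lam₁ / τ₁) • B₁)
          ((lam₁ / τ₁) • B₁) ((2 * lam₁ / τ₁) • C₁)) := by
  subst hJ hΛ
  have e1 : B₁ᵀ = B₁ := hB₁
  have e2 : B₂ᵀ = B₂ := hB₂
  simp only [Matrix.fromBlocks_transpose, Matrix.transpose_smul, Matrix.transpose_zero,
    Matrix.transpose_one, Matrix.transpose_neg, Matrix.transpose_transpose,
    hA₁, hA₂, hB₁, hB₂, hC₁, hC₂,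
    Matrix.fromBlocks_multiply, Matrix.fromBlocks_add,
    Matrix.smul_mul, Matrix.mul_smul, Matrix.one_mul, Matrix.mul_one,
    Matrix.zero_mul, Matrix.mul_zero, add_zero, zero_add, smul_zero,
    neg_zero]
  ext i j
  rcases i with (i|i)|(i|i) <;> rcases j with (j|j)|(j|j) <;>
    simp [regroup, Matrix.fromBlocks, Matrix.smul_apply, Matrix.add_apply, Matrix.neg_apply,
      mul_comm, div_eq_mul_inv] <;> ring_nf <;>
    simp [mul_comm, two_mul] <;> ring
end
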